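/- arXiv:2109.01464 — 3 statements merged into one kernel-verified Lean document; each statement's English description precedes it below -/
import Mathlib

section
/- If A and X are N×N real matrices with X·Xᵀ = I, then for every k ≥ 1, (sw(A,X)·sw(A,X)ᵀ)^k = 2^{2k-1}·[[(AAᵀ)^k, (AAᵀ)^k Xᵀ],[X(AAᵀ)^k, X(AAᵀ)^k Xᵀ]]. -/
/-!
Writing `C = [1; X]`, the swirl factors as `sw A X = C * A * [X, 1]`, and both
`[X, 1] * [X, 1]ᵀ = X Xᵀ + 1` and `Cᵀ * C = 1 + Xᵀ X` equal `2 • 1`. Hence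
`sw A X * (sw A X)ᵀ = 2 • C (A Aᵀ) Cᵀ`, and in a power of `C M Cᵀ` every inner
`Cᵀ C` contributes one more factor `2`.
-/

open Matrix

/-- The swirl of two `N × N` matrices. -/
def sw {n : ℕ} (A X : Matrix (Fin n) (Fin n) ℝ) :
    Matrix (Fin n ⊕ Fin n) (Fin n ⊕ Fin n) ℝ :=
  Matrix.fromBlocks (A * X) A (X * A * X) (X * A)

namespace Matrix

variable {R m n : Type*} [CommSemiring R] [Fintype n] [DecidableEq n]

theorem mul_mul_pow_succ_of_mul_eq_smul_one [Fintype m] [DecidableEq m] (C : Matrix m n R)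
    (M : Matrix n n R) (D : Matrix n m R) {c : R} (hDC : D * C = c • 1) (k : ℕ) :
    (C * M * D) ^ (k + 1) = c ^ k • (C * M ^ (k + 1) * D) := by
  induction k with
  | zero => simp
  | succ k ih =>
    calc (C * M * D) ^ (k + 1 + 1)
        = c ^ k • (C * M ^ (k + 1) * (D * C) * M * D) := by
          rw [pow_succ, ih, smul_mul_assoc]; simp only [Matrix.mul_assoc]
      _ = c ^ (k + 1) • (C * M ^ (k + 1 + 1) * D) := by
          rw [hDC, Matrix.mul_smul, Matrix.mul_one]
          simp only [Matrix.smul_mul, smul_smul, pow_succ, Matrix.mul_assoc]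

theorem mul_mul_mul_transpose_of_mul_transpose_eq_smul_one {l p : Type*} [Fintype p]
    (C : Matrix l n R) (A : Matrix n n R) (D : Matrix n p R) {c : R} (hD : D * Dᵀ = c • 1) :
    C * A * D * (C * A * D)ᵀ = c • (C * (A * Aᵀ) * Cᵀ) := by
  simp only [transpose_mul, Matrix.mul_assoc]
  rw [← Matrix.mul_assoc D, hD, Matrix.smul_mul, Matrix.one_mul, Matrix.mul_smul, Matrix.mul_smul]

theorem fromRows_one_mul_mul_transpose (X : Matrix m n R) (M : Matrix n n R) :
    fromRows 1 X * M * (fromRows 1 X)ᵀ = fromBlocks M (M * Xᵀ) (X * M) (X * M * Xᵀ) := by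
  rw [fromRows_mul, transpose_fromRows, fromRows_mul_fromCols, transpose_one, Matrix.one_mul,
    Matrix.mul_one, Matrix.mul_one]

theorem transpose_fromRows_one_mul_self [Fintype m] (X : Matrix m n R) :
    (fromRows (1 : Matrix n n R) X)ᵀ * fromRows (1 : Matrix n n R) X = 1 + Xᵀ * X := by
  rw [transpose_fromRows, fromCols_mul_fromRows, transpose_one, Matrix.one_mul]

theorem fromCols_one_mul_transpose_self [Fintype m] (X : Matrix n m R) :
    fromCols X (1 : Matrix n n R) * (fromCols X (1 : Matrix n n R))ᵀ = X * Xᵀ + 1 := by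
  rw [transpose_fromCols, fromCols_mul_fromRows, transpose_one, Matrix.one_mul]

end Matrix

section Swirl

variable {n : ℕ} (A : Matrix (Fin n) (Fin n) ℝ) {X : Matrix (Fin n) (Fin n) ℝ}

theorem sw_eq_fromRows_mul_mul_fromCols : sw A X = fromRows 1 X * A * fromCols X 1 := by
  rw [sw, fromRows_mul, fromRows_mul_fromCols, Matrix.one_mul, Matrix.mul_one, Matrix.mul_one]

theorem sw_mul_transpose_eq_smul (hX : X * Xᵀ = 1) :
    sw A X * (sw A X)ᵀ = (2 : ℝ) • (fromRows 1 X * (A * Aᵀ) * (fromRows 1 X)ᵀ) := by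
  rw [sw_eq_fromRows_mul_mul_fromCols, mul_mul_mul_transpose_of_mul_transpose_eq_smul_one]
  rw [fromCols_one_mul_transpose_self, hX, two_smul]

end Swirl

theorem sw_mul_transpose_pow {n : ℕ} (A X : Matrix (Fin n) (Fin n) ℝ)
    (hX : X * Xᵀ = 1) (k : ℕ) (hk : 1 ≤ k) :
    (sw A X * (sw A X)ᵀ) ^ k =
      (2 ^ (2 * k - 1) : ℝ) •
        Matrix.fromBlocks ((A * Aᵀ) ^ k) ((A * Aᵀ) ^ k * Xᵀ)
          (X * (A * Aᵀ) ^ k) (X * (A * Aᵀ) ^ k * Xᵀ) := by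
  obtain ⟨k, rfl⟩ := Nat.exists_eq_add_of_le' hk
  have hC : (fromRows (1 : Matrix (Fin n) (Fin n) ℝ) X)ᵀ
      * fromRows (1 : Matrix (Fin n) (Fin n) ℝ) X = (2 : ℝ) • (1 : Matrix (Fin n) (Fin n) ℝ) := by
    rw [transpose_fromRows_one_mul_self, mul_eq_one_comm.mp hX, two_smul]
  rw [sw_mul_transpose_eq_smul A hX, smul_pow, mul_mul_pow_succ_of_mul_eq_smul_one _ _ _ hC,
    fromRows_one_mul_mul_transpose, smul_smul, ← pow_add]
  congr 2
  omega
end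

section
/- If A and X are N×N real matrices with X·Xᵀ = I, then tr((sw(A,X)·sw(A,X)ᵀ)^k) = 2^{2k}·tr((AAᵀ)^k) for every k ≥ 1. -/
open Matrix

/-!
`sw A X` factors as `P * Q` with `P = [1; X]` (a column of blocks) and `Q = [A X, A]` (a row of
blocks). Orthogonality of `X` gives `Q Qᵀ = 2 A Aᵀ` and `Pᵀ P = 2`, so `sw A X * (sw A X)ᵀ` is
`P (2 A Aᵀ) Pᵀ`. For `k ≥ 1` the trace of its `k`-th power may be cycled to the trace of
`(2 A Aᵀ Pᵀ P) ^ k = (4 A Aᵀ) ^ k`.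
-/

namespace Matrix

variable {m n R : Type*} [Fintype m] [Fintype n] [DecidableEq m] [DecidableEq n] [CommSemiring R]

theorem mul_pow_succ_eq_mul_pow_mul (P : Matrix m n R) (Q : Matrix n m R) (k : ℕ) :
    (P * Q) ^ (k + 1) = P * (Q * P) ^ k * Q := by
  induction k with
  | zero => simp
  | succ k ih =>
    rw [pow_succ, ih, pow_succ]
    simp only [Matrix.mul_assoc]

theorem trace_mul_pow_succ_comm (P : Matrix m n R) (Q : Matrix n m R) (k : ℕ) :
    trace ((P * Q) ^ (k + 1)) = trace ((Q * P) ^ (k + 1)) := by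
  rw [mul_pow_succ_eq_mul_pow_mul, Matrix.mul_assoc, trace_mul_comm, Matrix.mul_assoc,
    ← pow_succ]

end Matrix

section Swirl

variable {n : ℕ} (A X : Matrix (Fin n) (Fin n) ℝ)

theorem sw_eq_fromRows_mul_fromCols :
    sw A X = fromRows (1 : Matrix (Fin n) (Fin n) ℝ) X * fromCols (A * X) A := by
  rw [fromRows_mul_fromCols, sw, Matrix.one_mul, Matrix.one_mul, Matrix.mul_assoc]

theorem sw_mul_transpose_sw (hX : X * Xᵀ = 1) :
    sw A X * (sw A X)ᵀ =
      fromRows (1 : Matrix (Fin n) (Fin n) ℝ) X * ((2 : ℝ) • (A * Aᵀ)) *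
        (fromRows (1 : Matrix (Fin n) (Fin n) ℝ) X)ᵀ := by
  have hQ : fromCols (A * X) A * (fromCols (A * X) A)ᵀ = (2 : ℝ) • (A * Aᵀ) := by
    rw [transpose_fromCols, fromCols_mul_fromRows, transpose_mul, Matrix.mul_assoc,
      ← Matrix.mul_assoc X, hX, Matrix.one_mul, two_smul]
  rw [sw_eq_fromRows_mul_fromCols, transpose_mul, ← hQ]
  simp only [Matrix.mul_assoc]

theorem transpose_fromRows_one_mul_self (hX : Xᵀ * X = 1) :
    (fromRows (1 : Matrix (Fin n) (Fin n) ℝ) X)ᵀ * fromRows (1 : Matrix (Fin n) (Fin n) ℝ) X =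
      (2 : ℝ) • 1 := by
  rw [transpose_fromRows, fromCols_mul_fromRows, transpose_one, Matrix.one_mul, hX, two_smul]

end Swirl

theorem trace_sw_mul_transpose_pow {n : ℕ} (A X : Matrix (Fin n) (Fin n) ℝ)
    (hX : X * Xᵀ = 1) (k : ℕ) (hk : 1 ≤ k) :
    ((sw A X * (sw A X)ᵀ) ^ k).trace = 2 ^ (2 * k) * ((A * Aᵀ) ^ k).trace := by
  obtain ⟨j, rfl⟩ := Nat.exists_eq_add_of_le' hk
  set P := fromRows (1 : Matrix (Fin n) (Fin n) ℝ) X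
  have hPP : Pᵀ * P = (2 : ℝ) • 1 := transpose_fromRows_one_mul_self X (mul_eq_one_comm.mp hX)
  calc ((sw A X * (sw A X)ᵀ) ^ (j + 1)).trace
      = (((2 : ℝ) • (A * Aᵀ) * Pᵀ * P) ^ (j + 1)).trace := by
        rw [sw_mul_transpose_sw A X hX, Matrix.mul_assoc P, trace_mul_pow_succ_comm]
    _ = ((4 : ℝ) ^ (j + 1)) * ((A * Aᵀ) ^ (j + 1)).trace := by
        rw [Matrix.mul_assoc _ Pᵀ, hPP, Matrix.mul_smul, Matrix.mul_one, smul_smul, smul_pow,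
          trace_smul, smul_eq_mul]
        norm_num
    _ = 2 ^ (2 * (j + 1)) * ((A * Aᵀ) ^ (j + 1)).trace := by
        rw [pow_mul]
        norm_num
end

section
/- Let s, t, N be integers with N ≥ 1, and let H = ⟨(s,t),(t,s)⟩ be the subgroup of (ZMod N) × (ZMod N) generated by (s,t) and (t,s). Then the index of H in (ZMod N) × (ZMod N) divides N · gcd(s² − t², N) (in particular, if gcd(s−t, N) = gcd(s+t, N) = 1, the quotient has order dividing N). -/
/-!
Write `d = s² - t²` and `g = gcd(d, N)`. The combinations `s • (s, t) - t • (t, s) = (d, 0)` and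
`s • (t, s) - t • (s, t) = (0, d)` lie in `H`, so `H` contains `⟨d⟩ × ⟨d⟩`. In `ZMod N` the
cyclic subgroup `⟨d⟩` has index `g`, so the index of `H` divides `g² ∣ N g`.
-/

open AddSubgroup

/-- Pulled back to `ℤ`, the subgroup `⟨k⟩` of `ZMod N` becomes `kℤ + Nℤ = gcd(k, N) ℤ`. -/
theorem ZMod.index_zmultiples_intCast (N : ℕ) (k : ℤ) :
    (zmultiples (k : ZMod N)).index = Int.gcd k N := by
  have hcomap : (zmultiples (k : ZMod N)).comap (Int.castAddHom (ZMod N)) =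
      zmultiples (Int.gcd k N : ℤ) := by
    rw [← Int.zmultiples_sup, ← ZMod.ker_intCastAddHom, ← AddSubgroup.comap_map_eq,
      AddMonoidHom.map_zmultiples, Int.coe_castAddHom]
  rw [← index_comap_of_surjective _ (f := Int.castAddHom (ZMod N)) ZMod.intCast_surjective,
    hcomap, Int.index_zmultiples, Int.natAbs_natCast]

theorem prod_zmultiples_sq_sub_sq_le_closure {R : Type*} [CommRing R] (s t : ℤ) :
    (zmultiples ((s ^ 2 - t ^ 2 : ℤ) : R)).prod (zmultiples ((s ^ 2 - t ^ 2 : ℤ) : R)) ≤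
      closure ({((s : R), (t : R)), ((t : R), (s : R))} : Set (R × R)) := by
  set H := closure ({((s : R), (t : R)), ((t : R), (s : R))} : Set (R × R))
  have hst : ((s : R), (t : R)) ∈ H := subset_closure (by simp)
  have hts : ((t : R), (s : R)) ∈ H := subset_closure (by simp)
  have hleft : (((s ^ 2 - t ^ 2 : ℤ) : R), (0 : R)) ∈ H := by
    convert sub_mem (zsmul_mem hst s) (zsmul_mem hts t) using 1
    ext <;> simp [zsmul_eq_mul] <;> ring
  have hright : ((0 : R), ((s ^ 2 - t ^ 2 : ℤ) : R)) ∈ H := by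
    convert sub_mem (zsmul_mem hts s) (zsmul_mem hst t) using 1
    ext <;> simp [zsmul_eq_mul] <;> ring
  rintro ⟨-, -⟩ ⟨⟨m, rfl⟩, ⟨n, rfl⟩⟩
  convert add_mem (zsmul_mem hleft m) (zsmul_mem hright n) using 1
  simp

theorem index_st_subgroup_divides_general (s t : ℤ) (N : ℕ) :
    (AddSubgroup.closure
        ({((s : ZMod N), (t : ZMod N)), ((t : ZMod N), (s : ZMod N))} :
          Set (ZMod N × ZMod N))).index ∣
      N * Int.gcd (s ^ 2 - t ^ 2) (N : ℤ) := by
  have hgN : Int.gcd (s ^ 2 - t ^ 2) N ∣ N := Int.ofNat_dvd.mp (Int.gcd_dvd_right _ _)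
  calc _ ∣ ((zmultiples ((s ^ 2 - t ^ 2 : ℤ) : ZMod N)).prod
          (zmultiples ((s ^ 2 - t ^ 2 : ℤ) : ZMod N))).index :=
        index_dvd_of_le (prod_zmultiples_sq_sub_sq_le_closure s t)
    _ = Int.gcd (s ^ 2 - t ^ 2) N * Int.gcd (s ^ 2 - t ^ 2) N := by
        rw [index_prod, ZMod.index_zmultiples_intCast]
    _ ∣ N * Int.gcd (s ^ 2 - t ^ 2) N := mul_dvd_mul_right hgN _

theorem index_st_subgroup_divides (s t : ℤ) (N : ℕ) (hN : 1 ≤ N) :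
    (AddSubgroup.closure
        ({((s : ZMod N), (t : ZMod N)), ((t : ZMod N), (s : ZMod N))} :
          Set (ZMod N × ZMod N))).index ∣
      N * Int.gcd (s ^ 2 - t ^ 2) (N : ℤ) :=
  index_st_subgroup_divides_general s t N
end
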